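/- arXiv:2410.10230 — 3 statements merged into one kernel-verified Lean document; each statement's English description precedes it below -/
import Mathlib

section
/- Let Π = {π_θ : θ ∈ Θ} be an exponential family with sufficient statistic T and log-partition function g, and let the prior be π_{θ_p} ∈ Π. For a linear risk function f_η(x) = η·T(x) + C and PAC-Bayes temperature λ > 0, define Catoni's objective Obj(θ) = π_θ[f_η] + λ·KL(π_θ, π_{θ_p}). Then the gradient of Obj with respect to θ equals V_θ(η + λ(θ − θ_p)), where V_θ = Cov_{π_θ}[T] is Fisher's information matrix. Consequently, the update θ̃ = θ_p − λ⁻¹η satisfies θ̃ = θ − λ⁻¹ V_θ⁻¹ ∇Obj(θ) whenever V_θ is invertible. -/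
open MeasureTheory
open scoped RealInnerProductSpace

/-!
Since `π_θ[T] = ∇g(θ)`, the objective is `⟪η, ∇g θ⟫ + C + λ D(θ)` near `θ`, where
`D(θ) = ⟪θ - θp, ∇g θ⟫ - g θ + g θp` is the Bregman divergence of `g`. Differentiating, the
first-order terms `±∇g θ` in `∇D` cancel, and what remains is the Hessian `V` applied to
`η + λ (θ - θp)`. The Hessian enters through its adjoint, and `V = Vᵀ` because its entries are
those of a covariance matrix (only one derivative of `∇g` is available, so Schwarz's theorem
cannot be used). The natural-gradient identity is then linear algebra with `W V = 1`.
-/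

theorem LinearMap.isSymmetric_of_inner_single {ι : Type*} [Fintype ι] [DecidableEq ι]
    (V : EuclideanSpace ℝ ι →ₗ[ℝ] EuclideanSpace ℝ ι)
    (h : ∀ i j, ⟪EuclideanSpace.single i 1, V (EuclideanSpace.single j 1)⟫ =
      ⟪EuclideanSpace.single j 1, V (EuclideanSpace.single i 1)⟫) :
    V.IsSymmetric := by
  intro u w
  have hB : (innerₗ _).comp V = (innerₗ _).compl₂ V := by
    refine LinearMap.ext_basis (EuclideanSpace.basisFun ι ℝ).toBasis
      (EuclideanSpace.basisFun ι ℝ).toBasis fun i j => ?_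
    simp [real_inner_comm, h]
  exact LinearMap.congr_fun₂ hB u w

theorem integral_inner_add_const {X E : Type*} [MeasurableSpace X] [NormedAddCommGroup E]
    [InnerProductSpace ℝ E] [CompleteSpace E] {μ : Measure X} [IsProbabilityMeasure μ]
    {T : X → E} (hT : Integrable T μ) (η : E) (C : ℝ) :
    ∫ x, (⟪η, T x⟫ + C) ∂μ = ⟪η, ∫ x, T x ∂μ⟫ + C := by
  rw [integral_add (hT.const_inner η) (integrable_const C), integral_inner hT, integral_const,
    probReal_univ, one_smul]

section Gradient

variable {E : Type*} [NormedAddCommGroup E] [InnerProductSpace ℝ E] [CompleteSpace E]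
  {g : E → ℝ} {G : E → E} {V : E →L[ℝ] E} {θ : E}

theorem HasFDerivAt.hasGradientAt_inner_left_of_isSymmetric (hG : HasFDerivAt G V θ)
    (hV : (V : E →ₗ[ℝ] E).IsSymmetric) (η : E) :
    HasGradientAt (fun θ' => ⟪η, G θ'⟫) (V η) θ := by
  rw [hasGradientAt_iff_hasFDerivAt]
  refine ((innerSL ℝ η).hasFDerivAt.comp θ hG).congr_fderiv ?_
  ext h
  simpa using (hV η h).symm

theorem hasGradientAt_bregman (hg : HasGradientAt g (G θ) θ) (hG : HasFDerivAt G V θ)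
    (hV : (V : E →ₗ[ℝ] E).IsSymmetric) (θp : E) :
    HasGradientAt (fun θ' => ⟪θ' - θp, G θ'⟫ - g θ' + g θp) (V (θ - θp)) θ := by
  rw [hasGradientAt_iff_hasFDerivAt] at hg ⊢
  refine ((((hasFDerivAt_id θ).sub_const θp).inner ℝ hG).sub hg).add_const (g θp)
    |>.congr_fderiv ?_
  ext h
  simp only [sub_apply, ContinuousLinearMap.comp_apply,
    ContinuousLinearMap.prod_apply, ContinuousLinearMap.id_apply, fderivInnerCLM_apply,
    InnerProductSpace.toDual_apply_apply, id_eq]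
  rw [← ContinuousLinearMap.coe_coe V, hV, real_inner_comm h]
  ring

theorem hasGradientAt_catoniObjective (hg : HasGradientAt g (G θ) θ) (hG : HasFDerivAt G V θ)
    (hV : (V : E →ₗ[ℝ] E).IsSymmetric) (η θp : E) (C lam : ℝ) :
    HasGradientAt (fun θ' => ⟪η, G θ'⟫ + C + lam * (⟪θ' - θp, G θ'⟫ - g θ' + g θp))
      (V (η + lam • (θ - θp))) θ := by
  have hrisk := hG.hasGradientAt_inner_left_of_isSymmetric hV η
  have hkl := hasGradientAt_bregman hg hG hV θp
  rw [hasGradientAt_iff_hasFDerivAt] at hrisk hkl ⊢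
  refine ((hrisk.add_const C).add (hkl.const_mul lam)).congr_fderiv ?_
  simp

end Gradient

theorem stmt4_general {X : Type*} [MeasurableSpace X] {d : ℕ}
    (T : X → EuclideanSpace ℝ (Fin d))
    (Θ : Set (EuclideanSpace ℝ (Fin d))) (hΘ : IsOpen Θ)
    (π : EuclideanSpace ℝ (Fin d) → Measure X)
    (hprob : ∀ θ' ∈ Θ, IsProbabilityMeasure (π θ'))
    (g : EuclideanSpace ℝ (Fin d) → ℝ)
    (hgd : ∀ θ' ∈ Θ, DifferentiableAt ℝ g θ')
    (hintT : ∀ θ' ∈ Θ, Integrable T (π θ'))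
    (hmean : ∀ θ' ∈ Θ, (∫ x, T x ∂(π θ')) = gradient g θ')
    (η : EuclideanSpace ℝ (Fin d)) (C : ℝ) (lam : ℝ) (hlam : 0 < lam)
    (θ θp : EuclideanSpace ℝ (Fin d)) (hθ : θ ∈ Θ)
    (hgdiff : DifferentiableAt ℝ (gradient g) θ)
    (V : EuclideanSpace ℝ (Fin d) →L[ℝ] EuclideanSpace ℝ (Fin d))
    (hVhess : V = fderiv ℝ (gradient g) θ)
    (hVcov : ∀ i j : Fin d,
      ⟪EuclideanSpace.single i 1, V (EuclideanSpace.single j 1)⟫ =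
        (∫ x, T x i * T x j ∂(π θ)) - (∫ x, T x i ∂(π θ)) * (∫ x, T x j ∂(π θ)))
    (Obj : EuclideanSpace ℝ (Fin d) → ℝ)
    (hObj : ∀ θ', Obj θ' =
      (∫ x, (⟪η, T x⟫ + C) ∂(π θ')) +
        lam * (⟪θ' - θp, gradient g θ'⟫ - g θ' + g θp)) :
    HasGradientAt Obj (V (η + lam • (θ - θp))) θ ∧
      (∀ W : EuclideanSpace ℝ (Fin d) →L[ℝ] EuclideanSpace ℝ (Fin d),
        W.comp V = ContinuousLinearMap.id ℝ _ →
          θp - lam⁻¹ • η = θ - lam⁻¹ • W (V (η + lam • (θ - θp)))) := by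
  refine ⟨?_, fun W hW => ?_⟩
  · have hV : (V : EuclideanSpace ℝ (Fin d) →ₗ[ℝ] _).IsSymmetric := by
      refine LinearMap.isSymmetric_of_inner_single _ fun i j => ?_
      simp only [ContinuousLinearMap.coe_coe, hVcov, mul_comm (T _ i)]
      ring
    have hG : HasFDerivAt (gradient g) V θ := hVhess ▸ hgdiff.hasFDerivAt
    refine (hasGradientAt_catoniObjective (hgd θ hθ).hasGradientAt hG hV η θp C lam)
      |>.congr_of_eventuallyEq ?_
    filter_upwards [hΘ.mem_nhds hθ] with θ' hθ'
    have := hprob θ' hθ'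
    rw [hObj, integral_inner_add_const (hintT θ' hθ'), hmean θ' hθ']
  · have hWV : W (V (η + lam • (θ - θp))) = η + lam • (θ - θp) := DFunLike.congr_fun hW _
    rw [hWV, smul_add, smul_smul, inv_mul_cancel₀ hlam.ne', one_smul]
    abel

/-- For an exponential family with sufficient statistic `T`,
log-partition `g`, prior `π_{θ_p}`, linear risk `f_η(x) = η·T(x) + C` and
temperature `λ > 0`, Catoni's objective `Obj(θ) = π_θ[f_η] + λ KL(π_θ, π_{θ_p})`
(with `KL(π_θ, π_{θ_p}) = (θ−θ_p)·∇g(θ) − g(θ) + g(θ_p)`) has gradient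
`V_θ (η + λ(θ − θ_p))` where `V_θ = Cov_{π_θ}[T] = ∇²g(θ)` is Fisher's information;
consequently `θ̃ = θ_p − λ⁻¹η` satisfies `θ̃ = θ − λ⁻¹ V_θ⁻¹ ∇Obj(θ)` when `V_θ`
is invertible. -/
theorem stmt4 {X : Type*} [MeasurableSpace X] {d : ℕ}
    (T : X → EuclideanSpace ℝ (Fin d))
    (Θ : Set (EuclideanSpace ℝ (Fin d))) (hΘ : IsOpen Θ)
    (π : EuclideanSpace ℝ (Fin d) → Measure X)
    (hprob : ∀ θ' ∈ Θ, IsProbabilityMeasure (π θ'))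
    (g : EuclideanSpace ℝ (Fin d) → ℝ)
    (hgd : ∀ θ' ∈ Θ, DifferentiableAt ℝ g θ')
    (hintT : ∀ θ' ∈ Θ, Integrable T (π θ'))
    (hL2T : ∀ θ' ∈ Θ, MemLp T 2 (π θ'))
    (hmean : ∀ θ' ∈ Θ, (∫ x, T x ∂(π θ')) = gradient g θ')
    (η : EuclideanSpace ℝ (Fin d)) (C : ℝ) (lam : ℝ) (hlam : 0 < lam)
    (θ θp : EuclideanSpace ℝ (Fin d)) (hθ : θ ∈ Θ) (hθp : θp ∈ Θ)
    (hgdiff : DifferentiableAt ℝ (gradient g) θ)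
    (V : EuclideanSpace ℝ (Fin d) →L[ℝ] EuclideanSpace ℝ (Fin d))
    (hVhess : V = fderiv ℝ (gradient g) θ)
    (hVcov : ∀ i j : Fin d,
      ⟪EuclideanSpace.single i 1, V (EuclideanSpace.single j 1)⟫ =
        (∫ x, T x i * T x j ∂(π θ)) - (∫ x, T x i ∂(π θ)) * (∫ x, T x j ∂(π θ)))
    (Obj : EuclideanSpace ℝ (Fin d) → ℝ)
    (hObj : ∀ θ', Obj θ' =
      (∫ x, (⟪η, T x⟫ + C) ∂(π θ')) +
        lam * (⟪θ' - θp, gradient g θ'⟫ - g θ' + g θp)) :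
    HasGradientAt Obj (V (η + lam • (θ - θp))) θ ∧
      (∀ W : EuclideanSpace ℝ (Fin d) →L[ℝ] EuclideanSpace ℝ (Fin d),
        W.comp V = ContinuousLinearMap.id ℝ _ →
          θp - lam⁻¹ • η = θ - lam⁻¹ • W (V (η + lam • (θ - θp)))) :=
  stmt4_general T Θ hΘ π hprob g hgd hintT hmean η C lam hlam θ θp hθ hgdiff V hVhess hVcov Obj hObj
end

section
/- Let g : Θ → ℝ be strictly convex differentiable on convex open Θ, let θ₀, θ̂ ∈ Θ, Δθ = θ̂ − θ₀ ≠ 0, and kl_max > 0. Define a sequence t₀ = 0, and t_{i+1} = min(t_i + s_i, 1) where each step s_i > 0 is the largest value such that KL(θ₀ + t_{i+1}Δθ, θ₀ + t_iΔθ) ≤ kl_max (if the unconstrained step 1 − t_i satisfies the KL constraint, take t_{i+1} = 1). Let B = Δθ·(∇g(θ̂) − ∇g(θ₀)). Then whenever the constraint is active at step i (t_{i+1} < 1), we have t_{i+1} − t_i ≥ kl_max / B; consequently the sequence (t_i) reaches 1 in at most ⌈B / kl_max⌉ + 1 steps. -/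
/-!
Along the segment, `φ s = g (θ₀ + s • Δθ)` is convex with `φ' s = ⟪Δθ, ∇g (θ₀ + s • Δθ)⟫`, and
`KL (θ₀ + t₂ • Δθ) (θ₀ + t₁ • Δθ) = (t₂ - t₁) φ' t₂ - φ t₂ + φ t₁`. The tangent line at `t₁` gives
`φ t₂ - φ t₁ ≥ (t₂ - t₁) φ' t₁`, and `φ'` is monotone, so this KL is at most
`(t₂ - t₁) (φ' 1 - φ' 0) = (t₂ - t₁) B`. An active step has KL exactly `kl_max`, hence length at
least `kl_max / B`; since the increments telescope to at most `1`, no more than `B / kl_max` steps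
can be active.
-/

open scoped RealInnerProductSpace

open Finset

namespace ConvexOn

variable {S : Set ℝ} {f f' : ℝ → ℝ}

theorem monotoneOn_of_hasDerivAt (hf : ConvexOn ℝ S f) (hf' : ∀ x ∈ S, HasDerivAt f (f' x) x) :
    MonotoneOn f' S := by
  intro x hx y hy hxy
  rcases hxy.eq_or_lt with rfl | hxy
  · rfl
  exact (hf.le_slope_of_hasDerivAt hx hy hxy (hf' x hx)).trans
    (hf.slope_le_of_hasDerivAt hx hy hxy (hf' y hy))

theorem sub_mul_deriv_sub_add_le (hf : ConvexOn ℝ S f) (hf' : ∀ x ∈ S, HasDerivAt f (f' x) x)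
    {a b x y : ℝ} (ha : a ∈ S) (hb : b ∈ S) (hax : a ≤ x) (hxy : x < y) (hyb : y ≤ b) :
    (y - x) * f' y - f y + f x ≤ (y - x) * (f' b - f' a) := by
  have hx : x ∈ S := hf.1.ordConnected.out ha hb ⟨hax, hxy.le.trans hyb⟩
  have hy : y ∈ S := hf.1.ordConnected.out ha hb ⟨hax.trans hxy.le, hyb⟩
  have hpos : 0 < y - x := sub_pos.2 hxy
  have hchord : (y - x) * f' x ≤ f y - f x := by
    have := hf.le_slope_of_hasDerivAt hx hy hxy (hf' x hx)
    rwa [slope_def_field, le_div_iff₀ hpos, mul_comm] at this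
  have hmono := hf.monotoneOn_of_hasDerivAt hf'
  calc (y - x) * f' y - f y + f x ≤ (y - x) * (f' y - f' x) := by linarith
    _ ≤ (y - x) * (f' b - f' a) := by
      gcongr
      · exact hmono hy hb hyb
      · exact hmono ha hx hax

end ConvexOn

section ExpFamily

variable {E : Type*} [NormedAddCommGroup E] [InnerProductSpace ℝ E] [CompleteSpace E]
  {g : E → ℝ} {Θ : Set E} {θ Δ : E}

noncomputable def expFamilyKL (g : E → ℝ) (θ₂ θ₁ : E) : ℝ := ⟪θ₂ - θ₁, gradient g θ₂⟫ - g θ₂ + g θ₁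

theorem hasDerivAt_comp_add_smul {s : ℝ} (hg : DifferentiableAt ℝ g (θ + s • Δ)) :
    HasDerivAt (fun s : ℝ => g (θ + s • Δ)) ⟪Δ, gradient g (θ + s • Δ)⟫ s := by
  have hline : HasDerivAt (fun s : ℝ => θ + s • Δ) Δ s := by
    simpa using ((hasDerivAt_id s).smul_const Δ).const_add θ
  simpa [Function.comp_def, InnerProductSpace.toDual_apply_apply, real_inner_comm] using
    hg.hasGradientAt.hasFDerivAt.comp_hasDerivAt s hline

theorem ConvexOn.expFamilyKL_add_smul_le (hg : ConvexOn ℝ Θ g)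
    (hdiff : ∀ x ∈ Θ, DifferentiableAt ℝ g x) (hθ : θ ∈ Θ) (hθΔ : θ + Δ ∈ Θ)
    {t₁ t₂ : ℝ} (ht₁ : 0 ≤ t₁) (ht : t₁ < t₂) (ht₂ : t₂ ≤ 1) :
    expFamilyKL g (θ + t₂ • Δ) (θ + t₁ • Δ) ≤
      (t₂ - t₁) * ⟪Δ, gradient g (θ + Δ) - gradient g θ⟫ := by
  have hline : (AffineMap.lineMap θ (θ + Δ) : ℝ → E) = fun s => θ + s • Δ := by
    ext s; simp [AffineMap.lineMap_apply_module', add_comm]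
  have hconv : ConvexOn ℝ {s : ℝ | θ + s • Δ ∈ Θ} fun s => g (θ + s • Δ) := by
    have h := hg.comp_affineMap (AffineMap.lineMap θ (θ + Δ))
    rw [hline] at h
    exact h
  have hsegment :=
    hconv.sub_mul_deriv_sub_add_le (fun s hs => hasDerivAt_comp_add_smul (hdiff _ hs))
    (a := 0) (b := 1) (by simpa using hθ) (by simpa using hθΔ) ht₁ ht ht₂
  simp only [zero_smul, add_zero, one_smul] at hsegment
  rwa [expFamilyKL, add_sub_add_left_eq_sub, ← sub_smul, real_inner_smul_left, inner_sub_right]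

end ExpFamily

theorem Monotone.apply_ceil_div_add_one_eq_one {t : ℕ → ℝ} {κ B : ℝ} (hκ : 0 < κ)
    (ht0 : t 0 = 0) (hmono : Monotone t) (hle : ∀ i, t i ≤ 1)
    (hgap : ∀ i, t (i + 1) < 1 → κ ≤ (t (i + 1) - t i) * B) :
    t (⌈B / κ⌉₊ + 1) = 1 := by
  set N := ⌈B / κ⌉₊ + 1
  by_contra hne
  have htN : t N < 1 := (hle N).lt_of_ne hne
  have hgapN : ∀ i ∈ range N, κ ≤ (t (i + 1) - t i) * B := fun i hi =>
    hgap i ((hmono (Nat.succ_le_of_lt (mem_range.1 hi))).trans_lt htN)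
  have hB : 0 < B := pos_of_mul_pos_right (hκ.trans_le (hgapN 0 (by simp [N])))
    (sub_nonneg.2 (hmono zero_le_one))
  have hsum : N * κ ≤ t N * B := calc
    N * κ = ∑ _i ∈ range N, κ := by simp
    _ ≤ ∑ i ∈ range N, (t (i + 1) - t i) * B := sum_le_sum hgapN
    _ = t N * B := by rw [← sum_mul, sum_range_sub, ht0, sub_zero]
  have hN : B + κ ≤ N * κ := by
    have h := mul_le_mul_of_nonneg_right (Nat.le_ceil (B / κ)) hκ.le
    rw [div_mul_cancel₀ B hκ.ne'] at h
    push_cast [N]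
    linarith
  linarith [mul_lt_of_lt_one_left hB htN]

theorem stmt7_general {d : ℕ} (Θ : Set (EuclideanSpace ℝ (Fin d)))
    (g : EuclideanSpace ℝ (Fin d) → ℝ)
    (hconv : StrictConvexOn ℝ Θ g)
    (hdiff : ∀ x ∈ Θ, DifferentiableAt ℝ g x)
    (θ₀ θhat : EuclideanSpace ℝ (Fin d)) (hθ₀ : θ₀ ∈ Θ) (hθhat : θhat ∈ Θ)
    (Δθ : EuclideanSpace ℝ (Fin d)) (hΔθ : Δθ = θhat - θ₀)
    (klmax : ℝ) (hkl : 0 < klmax)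
    (KL : EuclideanSpace ℝ (Fin d) → EuclideanSpace ℝ (Fin d) → ℝ)
    (hKL : ∀ θ₂ θ₁, KL θ₂ θ₁ = ⟪θ₂ - θ₁, gradient g θ₂⟫ - g θ₂ + g θ₁)
    (B : ℝ) (hB : B = ⟪Δθ, gradient g θhat - gradient g θ₀⟫)
    (t : ℕ → ℝ)
    (ht0 : t 0 = 0) (hmono : Monotone t)
    (hrange : ∀ i, 0 ≤ t i ∧ t i ≤ 1)
    (hstep : ∀ i,
      (KL (θ₀ + (1 : ℝ) • Δθ) (θ₀ + t i • Δθ) ≤ klmax → t (i + 1) = 1) ∧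
      (¬ KL (θ₀ + (1 : ℝ) • Δθ) (θ₀ + t i • Δθ) ≤ klmax →
        t i < t (i + 1) ∧ t (i + 1) < 1 ∧
          KL (θ₀ + t (i + 1) • Δθ) (θ₀ + t i • Δθ) = klmax)) :
    (∀ i, t (i + 1) < 1 → klmax / B ≤ t (i + 1) - t i) ∧
      t (Nat.ceil (B / klmax) + 1) = 1 := by
  have hθhat' : θhat = θ₀ + Δθ := by rw [hΔθ, add_sub_cancel]
  have hactive : ∀ i, t (i + 1) < 1 → t i < t (i + 1) ∧ klmax ≤ (t (i + 1) - t i) * B := by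
    intro i hi
    obtain ⟨hlt, -, hKLeq⟩ := (hstep i).2 fun h => hi.ne ((hstep i).1 h)
    refine ⟨hlt, hKLeq ▸ ?_⟩
    rw [hKL, hB, hθhat']
    exact hconv.convexOn.expFamilyKL_add_smul_le hdiff hθ₀ (hθhat' ▸ hθhat) (hrange i).1 hlt hi.le
  refine ⟨fun i hi => ?_, hmono.apply_ceil_div_add_one_eq_one hkl ht0 (fun i => (hrange i).2)
    fun i hi => (hactive i hi).2⟩
  obtain ⟨hlt, hle⟩ := hactive i hi
  have hBpos : 0 < B := pos_of_mul_pos_right (hkl.trans_le hle) (sub_nonneg.2 hlt.le)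
  rwa [div_le_iff₀ hBpos]

/-- For `g` strictly convex differentiable on convex open `Θ`,
`Δθ = θ̂ − θ₀ ≠ 0`, `kl_max > 0`, and the sequence `t₀ = 0`,
`t_{i+1} = min(t_i + s_i, 1)` with `s_i` the largest step such that
`KL(θ₀+t_{i+1}Δθ, θ₀+t_iΔθ) ≤ kl_max` (taking `t_{i+1} = 1` if the full step
satisfies the constraint), and `B = Δθ·(∇g(θ̂) − ∇g(θ₀))`: whenever the constraint
is active (`t_{i+1} < 1`) one has `t_{i+1} − t_i ≥ kl_max / B`, and `(t_i)` reaches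
`1` in at most `⌈B / kl_max⌉ + 1` steps. -/
theorem stmt7 {d : ℕ} (Θ : Set (EuclideanSpace ℝ (Fin d)))
    (hΘo : IsOpen Θ) (hΘc : Convex ℝ Θ)
    (g : EuclideanSpace ℝ (Fin d) → ℝ)
    (hconv : StrictConvexOn ℝ Θ g)
    (hdiff : ∀ x ∈ Θ, DifferentiableAt ℝ g x)
    (θ₀ θhat : EuclideanSpace ℝ (Fin d)) (hθ₀ : θ₀ ∈ Θ) (hθhat : θhat ∈ Θ)
    (Δθ : EuclideanSpace ℝ (Fin d)) (hΔθ : Δθ = θhat - θ₀) (hΔθ0 : Δθ ≠ 0)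
    (klmax : ℝ) (hkl : 0 < klmax)
    (KL : EuclideanSpace ℝ (Fin d) → EuclideanSpace ℝ (Fin d) → ℝ)
    (hKL : ∀ θ₂ θ₁, KL θ₂ θ₁ = ⟪θ₂ - θ₁, gradient g θ₂⟫ - g θ₂ + g θ₁)
    (B : ℝ) (hB : B = ⟪Δθ, gradient g θhat - gradient g θ₀⟫)
    (t : ℕ → ℝ)
    (ht0 : t 0 = 0) (hmono : Monotone t)
    (hrange : ∀ i, 0 ≤ t i ∧ t i ≤ 1)
    (hstep : ∀ i,
      (KL (θ₀ + (1 : ℝ) • Δθ) (θ₀ + t i • Δθ) ≤ klmax → t (i + 1) = 1) ∧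
      (¬ KL (θ₀ + (1 : ℝ) • Δθ) (θ₀ + t i • Δθ) ≤ klmax →
        t i < t (i + 1) ∧ t (i + 1) < 1 ∧
          KL (θ₀ + t (i + 1) • Δθ) (θ₀ + t i • Δθ) = klmax)) :
    (∀ i, t (i + 1) < 1 → klmax / B ≤ t (i + 1) - t i) ∧
      t (Nat.ceil (B / klmax) + 1) = 1 :=
  stmt7_general Θ g hconv hdiff θ₀ θhat hθ₀ hθhat Δθ hΔθ klmax hkl KL hKL B hB t ht0 hmono hrange
    hstep
end

section
/- Let Π = {π_θ : θ ∈ Θ} be a family of probability measures with Θ ⊆ ℝ^d open and connected, dπ_θ/dπ_ref = exp(ℓ(θ, x)) with θ ↦ ℓ(θ, x) twice continuously differentiable for all x. Suppose there exists a finite-dimensional function space F, spanned by linearly independent functions T₁, …, T_m, T_{m+1} = 1, such that ∂_θ ℓ(θ, ·) ∈ F^d for all θ ∈ Θ (each partial derivative of ℓ in θ lies in F as a function of x). If Θ is additionally simply connected, then there exist functions β : Θ → ℝ^m, g : Θ → ℝ, and h : X → ℝ such that ℓ(θ, x) = β(θ)·T(x) − g(θ) + h(x) for all θ, x; i.e.,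 Π is a (curved) exponential family with sufficient statistic T = (T₁,…,T_m). -/
/-!
The span `V` of `T₁, …, T_m, 1` is finite-dimensional, so its members are determined by their
values on a finite set `s`; let `P` be the linear interpolation from `s` back into `V`.
Then `c θ := P (ℓ(θ, ·)|ₛ)` lies in `V` and depends differentiably on `θ`, and its
`θ`-derivative is `P` applied to the restriction of `∂_θ ℓ(θ, ·)`, which is `∂_θ ℓ(θ, ·)`
itself because that lies in `V`. Hence `ℓ(θ, x) - c θ x` has zero `θ`-derivative on the
connected open set `Θ` and is a function `h x` of `x` alone; writing `c θ` in terms of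
`T₁, …, T_m, 1` gives `β` and `g`.
-/

section FiniteEvaluation

variable {K X : Type*} [Field K]

theorem Submodule.exists_finset_injective_restrict (V : Submodule K (X → K))
    [FiniteDimensional K V] :
    ∃ s : Finset X, Function.Injective (LinearMap.funLeft K K ((↑) : s → X) ∘ₗ V.subtype) := by
  classical
  -- A minimal kernel among the restrictions to finite sets must be trivial: a nonzero `f` in it
  -- is nonzero at some `x`, and adding `x` to the set shrinks the kernel.
  obtain ⟨_, ⟨s, rfl⟩, hmin⟩ := IsArtinian.set_has_minimal
    (Set.range fun s : Finset X => LinearMap.ker (LinearMap.funLeft K K ((↑) : s → X) ∘ₗ V.subtype))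
    (Set.range_nonempty _)
  refine ⟨s, LinearMap.ker_eq_bot.mp ((Submodule.eq_bot_iff _).mpr fun f hf => ?_)⟩
  by_contra hf0
  obtain ⟨x, hx⟩ : ∃ x, (f : X → K) x ≠ 0 := by
    by_contra! hzero
    exact hf0 (Subtype.ext (funext hzero))
  refine hmin _ ⟨insert x s, rfl⟩ ((SetLike.lt_iff_le_and_exists).mpr ⟨fun g hg => ?_, f, hf, ?_⟩)
  · simp only [LinearMap.mem_ker, LinearMap.comp_apply, funext_iff, LinearMap.funLeft_apply,
      Pi.zero_apply, Subtype.forall] at hg ⊢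
    exact fun y hy => hg y (Finset.mem_insert_of_mem hy)
  · simp only [LinearMap.mem_ker, LinearMap.comp_apply, funext_iff, LinearMap.funLeft_apply,
      Pi.zero_apply, Subtype.forall, not_forall]
    exact ⟨x, Finset.mem_insert_self x s, hx⟩

theorem Submodule.exists_finset_leftInverse_restrict (V : Submodule K (X → K))
    [FiniteDimensional K V] :
    ∃ (s : Finset X) (P : (s → K) →ₗ[K] V), ∀ f ∈ V, (P fun x => f x : X → K) = f := by
  obtain ⟨s, hs⟩ := V.exists_finset_injective_restrict
  obtain ⟨P, hP⟩ := LinearMap.exists_leftInverse_of_injective _ (LinearMap.ker_eq_bot.mpr hs)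
  exact ⟨s, P, fun f hf => congrArg Subtype.val (LinearMap.congr_fun hP ⟨f, hf⟩)⟩

end FiniteEvaluation

theorem Module.Basis.map_mem_of_forall_mem {ι R M N : Type*} [Semiring R] [AddCommMonoid M]
    [Module R M] [AddCommMonoid N] [Module R N] (b : Module.Basis ι R M) (f : M →ₗ[R] N)
    {V : Submodule R N} (h : ∀ i, f (b i) ∈ V) (v : M) : f v ∈ V := by
  have hle : Submodule.span R (Set.range b) ≤ V.comap f :=
    Submodule.span_le.mpr (Set.range_subset_iff.mpr h)
  exact hle (b.span_eq ▸ Submodule.mem_top)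

section Derivatives

variable {E X : Type*} [NormedAddCommGroup E] [NormedSpace ℝ E]

theorem IsOpen.exists_mem_submodule_add_of_fderiv_mem {U : Set E} (hU : IsOpen U)
    (hU' : IsPreconnected U) {F : E → X → ℝ} (hF : ∀ x, DifferentiableOn ℝ (fun θ => F θ x) U)
    (V : Submodule ℝ (X → ℝ)) [FiniteDimensional ℝ V]
    (hV : ∀ θ ∈ U, ∀ v, (fun x => fderiv ℝ (fun θ' => F θ' x) θ v) ∈ V) :
    ∃ (c : E → V) (r : X → ℝ), ∀ θ ∈ U, F θ = c θ + r := by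
  obtain ⟨s, P, hP⟩ := V.exists_finset_leftInverse_restrict
  let c : E → V := fun θ => P fun j => F θ j
  have hc : ∀ x, ∀ θ ∈ U,
      HasFDerivAt (fun θ' => (c θ' : X → ℝ) x) (fderiv ℝ (fun θ' => F θ' x) θ) θ := by
    intro x θ hθ
    let φ : (s → ℝ) →L[ℝ] ℝ := (LinearMap.proj x ∘ₗ V.subtype ∘ₗ P).toContinuousLinearMap
    have hrestrict : HasFDerivAt (fun θ' (j : s) => F θ' j)
        (ContinuousLinearMap.pi fun j => fderiv ℝ (fun θ' => F θ' j) θ) θ :=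
      hasFDerivAt_pi.mpr fun j => ((hF j).differentiableAt (hU.mem_nhds hθ)).hasFDerivAt
    refine (φ.hasFDerivAt.comp θ hrestrict).congr_fderiv (ContinuousLinearMap.ext fun v => ?_)
    simpa [φ] using congrFun (hP _ (hV θ hθ v)) x
  choose r hr using fun x => hU.exists_eq_add_of_fderiv_eq hU' (hF x)
    (fun θ hθ => (hc x θ hθ).differentiableAt.differentiableWithinAt)
    (fun θ hθ => ((hc x θ hθ).fderiv).symm)
  exact ⟨c, r, fun θ hθ => funext fun x => hr x hθ⟩

end Derivatives

open MeasureTheory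

theorem stmt11_general {X : Type*} {d m : ℕ}
    (Θ : Set (EuclideanSpace ℝ (Fin d)))
    (hΘo : IsOpen Θ) (hΘconn : IsConnected Θ)
    (ℓ : EuclideanSpace ℝ (Fin d) → X → ℝ)
    (hC2 : ∀ x, ContDiffOn ℝ 2 (fun θ => ℓ θ x) Θ)
    (T : Fin m → X → ℝ)
    (hspan : ∀ θ ∈ Θ, ∀ i : Fin d,
      (fun x => fderiv ℝ (fun θ' => ℓ θ' x) θ (EuclideanSpace.single i 1)) ∈
        Submodule.span ℝ (Set.range (Fin.snoc T (fun _ => (1 : ℝ)) : Fin (m + 1) → X → ℝ))) :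
    ∃ (β : EuclideanSpace ℝ (Fin d) → Fin m → ℝ)
      (g : EuclideanSpace ℝ (Fin d) → ℝ) (h : X → ℝ),
      ∀ θ ∈ Θ, ∀ x, ℓ θ x = (∑ i, β θ i * T i x) - g θ + h x := by
  set V := Submodule.span ℝ (Set.range (Fin.snoc T (fun _ => (1 : ℝ)) : Fin (m + 1) → X → ℝ))
  have : FiniteDimensional ℝ V := FiniteDimensional.span_of_finite ℝ (Set.finite_range _)
  have hV : ∀ θ ∈ Θ, ∀ v, (fun x => fderiv ℝ (fun θ' => ℓ θ' x) θ v) ∈ V := fun θ hθ =>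
    (EuclideanSpace.basisFun (Fin d) ℝ).toBasis.map_mem_of_forall_mem
      (LinearMap.pi fun x => (fderiv ℝ (fun θ' => ℓ θ' x) θ : _ →ₗ[ℝ] ℝ))
      (fun i => by
        simp only [OrthonormalBasis.coe_toBasis, EuclideanSpace.basisFun_apply]
        exact hspan θ hθ i)
  obtain ⟨c, r, hcr⟩ := hΘo.exists_mem_submodule_add_of_fderiv_mem hΘconn.isPreconnected
    (fun x => (hC2 x).differentiableOn two_ne_zero) V hV
  choose a ha using fun θ => (Submodule.mem_span_range_iff_exists_fun ℝ).mp (c θ).2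
  refine ⟨fun θ i => a θ i.castSucc, fun θ => -a θ (Fin.last m), r, fun θ hθ x => ?_⟩
  rw [hcr θ hθ, ← ha θ]
  simp [Fin.sum_univ_castSucc]

/-- If a smoothly parameterized family `dπ_θ/dπ_ref = exp(ℓ(θ,x))`
on open, connected, simply connected `Θ ⊆ ℝ^d` is such that every θ-partial
derivative of `ℓ` lies (as a function of `x`) in the finite-dimensional space
spanned by linearly independent functions `T₁, …, T_m, T_{m+1} = 1`, then the
family is a (curved) exponential family:
`ℓ(θ,x) = β(θ)·T(x) − g(θ) + h(x)`. -/
theorem stmt11 {X : Type*} [MeasurableSpace X] {d m : ℕ}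
    (πref : Measure X) [IsProbabilityMeasure πref]
    (Θ : Set (EuclideanSpace ℝ (Fin d)))
    (hΘo : IsOpen Θ) (hΘconn : IsConnected Θ) (hΘsc : SimplyConnectedSpace Θ)
    (ℓ : EuclideanSpace ℝ (Fin d) → X → ℝ)
    (hC2 : ∀ x, ContDiffOn ℝ 2 (fun θ => ℓ θ x) Θ)
    (π : EuclideanSpace ℝ (Fin d) → Measure X)
    (hπ : ∀ θ, π θ = πref.withDensity (fun x => ENNReal.ofReal (Real.exp (ℓ θ x))))
    (hprob : ∀ θ ∈ Θ, IsProbabilityMeasure (π θ))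
    (T : Fin m → X → ℝ)
    (hTindep : LinearIndependent ℝ (Fin.snoc T (fun _ => (1 : ℝ)) : Fin (m + 1) → X → ℝ))
    (hspan : ∀ θ ∈ Θ, ∀ i : Fin d,
      (fun x => fderiv ℝ (fun θ' => ℓ θ' x) θ (EuclideanSpace.single i 1)) ∈
        Submodule.span ℝ (Set.range (Fin.snoc T (fun _ => (1 : ℝ)) : Fin (m + 1) → X → ℝ))) :
    ∃ (β : EuclideanSpace ℝ (Fin d) → Fin m → ℝ)
      (g : EuclideanSpace ℝ (Fin d) → ℝ) (h : X → ℝ),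
      ∀ θ ∈ Θ, ∀ x, ℓ θ x = (∑ i, β θ i * T i x) - g θ + h x :=
  stmt11_general Θ hΘo hΘconn ℓ hC2 T hspan
end
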